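/- Let X₁, …, X_n be normed spaces, (Y,d) a metric space, a = (a₁, …, a_n) ∈ X₁ × ⋯ × X_n, and let p₁, p₂, q₁, q₂ satisfy condition (★) with p₁ < p₂, and set α = q₂p₁/(q₁p₂). Every arbitrary map f : X₁ × ⋯ × X_n → Y which is ((q₁,1),p₁)-semi-integral at a is ((q₂,α),p₂)-semi-integral at a. -/

import Mathlib

/-!
Repeating points of a family turns the `((q₁,1),p₁)` inequality into the same inequality with
natural, hence (after scaling by `N` and letting `N → ∞`) arbitrary nonnegative, weights `tⱼ`
on both sides. With `dⱼ = d(f(a + xⱼ), f(a))` and `tⱼ = dⱼ ^ (q₂ - q₁)` the left side becomes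
`E = ∑ dⱼ ^ q₂`. On the right, Hölder's inequality with the conjugate exponents `q₂/(q₂-q₁)` and
`q₂/q₁`, followed by the inclusion `ℓ^{p₂} ⊆ ℓ^{p₁q₂/q₁}` (condition (★) gives `p₂q₁ ≤ p₁q₂`),
bounds each sum by `E ^ (1 - q₁/q₂) * (∑ⱼ |φ(xⱼ)| ^ p₂) ^ (p₁/p₂)`. Dividing by
`E ^ (1 - q₁/q₂)` gives `E ^ (q₁/q₂) ≤ C * S ^ (p₁/p₂)`, where `S` is the supremum over `φ` of
the `p₂`-sums; raising to the power `p₂/p₁` gives the claim with constant `C ^ (p₂/p₁)`.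
-/

/-- An arbitrary map `f : X₁ × ⋯ × X_n → Y` from a product of normed spaces to a metric
space is `((q,α),p)`-semi-integral at `a = (a₁,…,aₙ)` if there is `C ≥ 0` with
`(∑ⱼ d(f(a+xⱼ), f(a))^q)^{1/α} ≤ C ⋅ sup_{φᵢ∈B_{Xᵢ*}} ∑ⱼ |φ₁(xⱼ¹)⋯φₙ(xⱼⁿ)|^p`
for all finite families. -/
def MapSemiIntegralAt {𝕜 : Type*} [RCLike 𝕜] {n : ℕ} {X : Fin n → Type*}
    [∀ i, NormedAddCommGroup (X i)] [∀ i, NormedSpace 𝕜 (X i)]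
    {Y : Type*} [MetricSpace Y]
    (q α p : ℝ) (f : (∀ i, X i) → Y) (a : ∀ i, X i) : Prop :=
  ∃ C : ℝ, 0 ≤ C ∧ ∀ (m : ℕ) (x : Fin m → ∀ i, X i),
    (∑ j, dist (f (a + x j)) (f a) ^ q) ^ (1 / α) ≤
      C * ⨆ φ : ∀ i, {φ : X i →L[𝕜] 𝕜 // ‖φ‖ ≤ 1},
        ∑ j, (∏ i, ‖(φ i).1 (x j i)‖) ^ p

theorem Real.sum_rpow_le_rpow_sum {ι : Type*} (s : Finset ι) {g : ι → ℝ}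
    (hg : ∀ i ∈ s, 0 ≤ g i) {r : ℝ} (hr : 1 ≤ r) :
    ∑ i ∈ s, g i ^ r ≤ (∑ i ∈ s, g i) ^ r := by
  have hsplit : ∀ {x : ℝ}, 0 ≤ x → x ^ r = x ^ (r - 1) * x := fun hx => by
    rw [← Real.rpow_add_one' hx (by linarith), sub_add_cancel]
  calc ∑ i ∈ s, g i ^ r ≤ ∑ i ∈ s, (∑ i ∈ s, g i) ^ (r - 1) * g i := by
        refine Finset.sum_le_sum fun i hi => ?_
        rw [hsplit (hg i hi)]
        have hgi := hg i hi
        gcongr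
        exact Finset.single_le_sum hg hi
    _ = (∑ i ∈ s, g i) ^ r := by rw [← Finset.mul_sum, ← hsplit (Finset.sum_nonneg hg)]

theorem Real.rpow_le_of_le_mul_rpow {E K θ : ℝ} (hE : 0 ≤ E) (hK : 0 ≤ K) (hθ : 0 < θ)
    (h : E ≤ K * E ^ (1 - θ)) : E ^ θ ≤ K := by
  rcases hE.eq_or_lt with rfl | hE
  · rwa [Real.zero_rpow hθ.ne']
  refine le_of_mul_le_mul_right ?_ (Real.rpow_pos_of_pos hE (1 - θ))
  rwa [← Real.rpow_add hE, add_sub_cancel, Real.rpow_one]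

theorem nonpos_of_forall_natCast_mul_le {a b : ℝ} (h : ∀ N : ℕ, N * a ≤ b) : a ≤ 0 := by
  by_contra! ha
  obtain ⟨N, hN⟩ := exists_nat_gt (b / a)
  exact (h N).not_gt ((div_lt_iff₀ ha).1 hN)

section StarCondition

variable {p₁ p₂ q₁ q₂ : ℝ}

theorem lt_of_star_condition (hp₁ : 0 < p₁) (hp : p₁ < p₂) (hq : q₁ ≤ q₂)
    (hstar : 1 / p₁ - 1 / q₁ ≤ 1 / p₂ - 1 / q₂) : q₁ < q₂ := by
  refine hq.lt_of_ne ?_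
  rintro rfl
  have := one_div_lt_one_div_of_lt hp₁ hp
  linarith

theorem mul_le_mul_of_star_condition (hp₁ : 0 < p₁) (hp : p₁ ≤ p₂) (hpq₁ : p₁ ≤ q₁) (hq : q₁ ≤ q₂)
    (hstar : 1 / p₁ - 1 / q₁ ≤ 1 / p₂ - 1 / q₂) : p₂ * q₁ ≤ p₁ * q₂ := by
  have hp₂ : 0 < p₂ := hp₁.trans_le hp
  have hq₁ : 0 < q₁ := hp₁.trans_le hpq₁
  have hq₂ : 0 < q₂ := hq₁.trans_le hq
  rw [div_sub_div _ _ hp₁.ne' hq₁.ne', div_sub_div _ _ hp₂.ne' hq₂.ne',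
    div_le_div_iff₀ (by positivity) (by positivity)] at hstar
  nlinarith [mul_pos hp₁ hp₂, mul_nonneg (sub_nonneg.2 hpq₁) (sub_nonneg.2 hp), mul_pos hq₁ hq₂]

end StarCondition

section WeightedDomination

variable {F Φ : Type*} {g : F → ℝ} {h : Φ → F → ℝ} {C : ℝ}

theorem bddAbove_range_sum {ι : Type*} (s : Finset ι) {u : Φ → ι → ℝ}
    (hu : ∀ i, BddAbove (Set.range fun φ => u φ i)) :
    BddAbove (Set.range fun φ => ∑ i ∈ s, u φ i) := by
  refine ⟨∑ i ∈ s, ⨆ φ, u φ i, ?_⟩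
  rintro _ ⟨φ, rfl⟩
  exact Finset.sum_le_sum fun i _ => le_ciSup (hu i) φ

theorem sum_natCast_mul_le_of_forall_sum_le
    (hC : ∀ (m : ℕ) (x : Fin m → F), ∑ j, g (x j) ≤ C * ⨆ φ, ∑ j, h φ (x j))
    {m : ℕ} (x : Fin m → F) (k : Fin m → ℕ) :
    ∑ j, (k j : ℝ) * g (x j) ≤ C * ⨆ φ, ∑ j, (k j : ℝ) * h φ (x j) := by
  let e := (finSigmaFinEquiv (n := k)).symm
  have hrepeat : ∀ u : F → ℝ, ∑ l, u (x (e l).1) = ∑ j, (k j : ℝ) * u (x j) := fun u => by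
    rw [Equiv.sum_comp e (fun σ => u (x σ.1)), Fintype.sum_sigma]
    simp only [Finset.sum_const, Finset.card_univ, Fintype.card_fin, nsmul_eq_mul]
  simpa only [hrepeat] using hC _ fun l => x (e l).1

theorem sum_mul_le_of_forall_sum_le (hC0 : 0 ≤ C) (hg : ∀ x, 0 ≤ g x) (hh : ∀ φ x, 0 ≤ h φ x)
    (hbdd : ∀ x, BddAbove (Set.range fun φ => h φ x))
    (hC : ∀ (m : ℕ) (x : Fin m → F), ∑ j, g (x j) ≤ C * ⨆ φ, ∑ j, h φ (x j))
    {m : ℕ} (x : Fin m → F) {t : Fin m → ℝ} (ht : 0 ≤ t) :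
    ∑ j, t j * g (x j) ≤ C * ⨆ φ, ∑ j, t j * h φ (x j) := by
  rw [← sub_nonpos]
  refine nonpos_of_forall_natCast_mul_le (b := ∑ j, g (x j)) fun N => ?_
  -- The integer weights `⌊N * t j⌋` miss `N * t j` by less than one, an error of at most
  -- `∑ j, g (x j)` that does not grow with `N`.
  set k : Fin m → ℕ := fun j => ⌊N * t j⌋₊
  have hk_le : ∀ j, (k j : ℝ) ≤ N * t j := fun j => Nat.floor_le (mul_nonneg N.cast_nonneg (ht j))
  have hk_gt : ∀ j, N * t j - 1 < k j := fun j => by linarith [Nat.lt_floor_add_one (N * t j)]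
  have hlower : N * ∑ j, t j * g (x j) - ∑ j, g (x j) ≤ ∑ j, (k j : ℝ) * g (x j) := by
    rw [Finset.mul_sum, ← Finset.sum_sub_distrib]
    refine Finset.sum_le_sum fun j _ => ?_
    nlinarith [hg (x j), hk_gt j]
  have hupper : (⨆ φ, ∑ j, (k j : ℝ) * h φ (x j)) ≤ N * ⨆ φ, ∑ j, t j * h φ (x j) := by
    refine Real.iSup_le (fun φ => ?_) ?_
    · calc ∑ j, (k j : ℝ) * h φ (x j) ≤ N * ∑ j, t j * h φ (x j) := by
            rw [Finset.mul_sum]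
            refine Finset.sum_le_sum fun j _ => ?_
            nlinarith [hh φ (x j), hk_le j]
        _ ≤ N * ⨆ φ, ∑ j, t j * h φ (x j) := by
            gcongr
            exact le_ciSup (bddAbove_range_sum _ fun j =>
              (hbdd (x j)).range_comp_left (monotone_mul_left_of_nonneg (ht j))) φ
    · exact mul_nonneg N.cast_nonneg
        (Real.iSup_nonneg fun φ => Finset.sum_nonneg fun j _ => mul_nonneg (ht j) (hh φ (x j)))
  nlinarith [sum_natCast_mul_le_of_forall_sum_le hC x k, mul_le_mul_of_nonneg_left hupper hC0]

end WeightedDomination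

section Interpolation

variable {ι : Type*} [Fintype ι] {p₁ p₂ q₁ q₂ : ℝ}

theorem sum_rpow_mul_rpow_le {D P : ι → ℝ} (hD : 0 ≤ D) (hP : 0 ≤ P)
    (hp₁ : 0 < p₁) (hp₂ : 0 < p₂) (hq₁ : 0 < q₁) (hq : q₁ < q₂) (hpq : p₂ * q₁ ≤ p₁ * q₂) :
    ∑ i, D i ^ (q₂ - q₁) * P i ^ p₁ ≤
      (∑ i, D i ^ q₂) ^ (1 - q₁ / q₂) * (∑ i, P i ^ p₂) ^ (p₁ / p₂) := by
  have hq₂ : 0 < q₂ := hq₁.trans hq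
  have hθ₀ : 0 < q₁ / q₂ := div_pos hq₁ hq₂
  have hθ₁ : q₁ / q₂ < 1 := (div_lt_one hq₂).2 hq
  -- `p₂ ≤ p₁ q₂ / q₁`, so the `ℓ^{p₁ q₂ / q₁}`-sum is dominated by the `ℓ^{p₂}`-sum.
  have hr : 1 ≤ p₁ * q₂ / (p₂ * q₁) := (one_le_div (by positivity)).2 hpq
  have hD' : ∀ i, (D i ^ (q₂ - q₁)) ^ (1 - q₁ / q₂)⁻¹ = D i ^ q₂ := fun i => by
    rw [← Real.rpow_mul (hD i)]
    have : q₂ - q₁ ≠ 0 := sub_ne_zero.2 hq.ne'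
    congr 1
    field_simp
  have hP' : ∀ i, (P i ^ p₁) ^ (q₁ / q₂)⁻¹ = (P i ^ p₂) ^ (p₁ * q₂ / (p₂ * q₁)) := fun i => by
    rw [← Real.rpow_mul (hP i), ← Real.rpow_mul (hP i)]
    congr 1
    field_simp
  have hsumD : 0 ≤ ∑ i, D i ^ q₂ := Finset.sum_nonneg fun i _ => Real.rpow_nonneg (hD i) _
  have hsumP : 0 ≤ ∑ i, P i ^ p₂ := Finset.sum_nonneg fun i _ => Real.rpow_nonneg (hP i) _
  calc ∑ i, D i ^ (q₂ - q₁) * P i ^ p₁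
      ≤ (∑ i, (D i ^ (q₂ - q₁)) ^ (1 - q₁ / q₂)⁻¹) ^ (1 / (1 - q₁ / q₂)⁻¹) *
          (∑ i, (P i ^ p₁) ^ (q₁ / q₂)⁻¹) ^ (1 / (q₁ / q₂)⁻¹) :=
        Real.inner_le_Lp_mul_Lq_of_nonneg _ (Real.HolderConjugate.inv_one_sub_inv hθ₀ hθ₁).symm
          (fun i _ => Real.rpow_nonneg (hD i) _) (fun i _ => Real.rpow_nonneg (hP i) _)
    _ = (∑ i, D i ^ q₂) ^ (1 - q₁ / q₂) *
          (∑ i, (P i ^ p₂) ^ (p₁ * q₂ / (p₂ * q₁))) ^ (q₁ / q₂) := by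
        simp only [hD', hP', one_div, inv_inv]
    _ ≤ (∑ i, D i ^ q₂) ^ (1 - q₁ / q₂) *
          ((∑ i, P i ^ p₂) ^ (p₁ * q₂ / (p₂ * q₁))) ^ (q₁ / q₂) := by
        refine mul_le_mul_of_nonneg_left (Real.rpow_le_rpow ?_ ?_ hθ₀.le)
          (Real.rpow_nonneg hsumD _)
        · exact Finset.sum_nonneg fun i _ => Real.rpow_nonneg (Real.rpow_nonneg (hP i) _) _
        · exact Real.sum_rpow_le_rpow_sum _ (fun i _ => Real.rpow_nonneg (hP i) _) hr
    _ = (∑ i, D i ^ q₂) ^ (1 - q₁ / q₂) * (∑ i, P i ^ p₂) ^ (p₁ / p₂) := by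
        rw [← Real.rpow_mul hsumP]
        congr 2
        field_simp

theorem rpow_sum_rpow_le_of_forall_weighted {Φ : Type*} {D : ι → ℝ} {P : Φ → ι → ℝ} {C : ℝ}
    (hD : 0 ≤ D) (hP : ∀ φ, 0 ≤ P φ) (hbdd : BddAbove (Set.range fun φ => ∑ i, P φ i ^ p₂))
    (hC0 : 0 ≤ C) (hp₁ : 0 < p₁) (hp₂ : 0 < p₂) (hq₁ : 0 < q₁) (hq : q₁ < q₂)
    (hpq : p₂ * q₁ ≤ p₁ * q₂)
    (hw : ∀ t : ι → ℝ, 0 ≤ t → ∑ i, t i * D i ^ q₁ ≤ C * ⨆ φ, ∑ i, t i * P φ i ^ p₁) :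
    (∑ i, D i ^ q₂) ^ (q₁ / q₂) ≤ C * (⨆ φ, ∑ i, P φ i ^ p₂) ^ (p₁ / p₂) := by
  set E := ∑ i, D i ^ q₂
  set S := ⨆ φ, ∑ i, P φ i ^ p₂
  have hE : 0 ≤ E := Finset.sum_nonneg fun i _ => Real.rpow_nonneg (hD i) _
  have hS : 0 ≤ S :=
    Real.iSup_nonneg fun φ => Finset.sum_nonneg fun i _ => Real.rpow_nonneg (hP φ i) _
  refine Real.rpow_le_of_le_mul_rpow hE (by positivity) (div_pos hq₁ (hq₁.trans hq)) ?_
  have hE_eq : E = ∑ i, D i ^ (q₂ - q₁) * D i ^ q₁ := Finset.sum_congr rfl fun i _ => by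
    rw [← Real.rpow_add' (hD i) (by linarith), sub_add_cancel]
  have hsup : (⨆ φ, ∑ i, D i ^ (q₂ - q₁) * P φ i ^ p₁) ≤ E ^ (1 - q₁ / q₂) * S ^ (p₁ / p₂) := by
    refine Real.iSup_le (fun φ => (sum_rpow_mul_rpow_le hD (hP φ) hp₁ hp₂ hq₁ hq hpq).trans ?_)
      (by positivity)
    gcongr
    exacts [Finset.sum_nonneg fun i _ => Real.rpow_nonneg (hP φ i) _, le_ciSup hbdd φ]
  calc E ≤ C * ⨆ φ, ∑ i, D i ^ (q₂ - q₁) * P φ i ^ p₁ :=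
        hE_eq ▸ hw _ fun i => Real.rpow_nonneg (hD i) _
    _ ≤ C * S ^ (p₁ / p₂) * E ^ (1 - q₁ / q₂) := by
        rw [mul_assoc, mul_comm (S ^ _)]
        gcongr

end Interpolation

section DualUnitBall

variable {𝕜 : Type*} [RCLike 𝕜] {n : ℕ} {X : Fin n → Type*}
  [∀ i, NormedAddCommGroup (X i)] [∀ i, NormedSpace 𝕜 (X i)]

theorem bddAbove_range_prod_norm_rpow {p : ℝ} (hp : 0 ≤ p) (x : ∀ i, X i) :
    BddAbove (Set.range fun φ : ∀ i, {φ : X i →L[𝕜] 𝕜 // ‖φ‖ ≤ 1} =>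
      (∏ i, ‖(φ i).1 (x i)‖) ^ p) := by
  refine ⟨(∏ i, ‖x i‖) ^ p, ?_⟩
  rintro _ ⟨φ, rfl⟩
  refine Real.rpow_le_rpow (by positivity) ?_ hp
  exact Finset.prod_le_prod (fun i _ => norm_nonneg _) fun i _ =>
    ((φ i).1.le_of_opNorm_le (φ i).2 (x i)).trans_eq (one_mul _)

theorem MapSemiIntegralAt.exists_sum_mul_le {Y : Type*} [MetricSpace Y] {q p : ℝ} (hp : 0 ≤ p)
    {f : (∀ i, X i) → Y} {a : ∀ i, X i} (hf : MapSemiIntegralAt (𝕜 := 𝕜) q 1 p f a) :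
    ∃ C : ℝ, 0 ≤ C ∧ ∀ (m : ℕ) (x : Fin m → ∀ i, X i) (t : Fin m → ℝ), 0 ≤ t →
      ∑ j, t j * dist (f (a + x j)) (f a) ^ q ≤
        C * ⨆ φ : ∀ i, {φ : X i →L[𝕜] 𝕜 // ‖φ‖ ≤ 1}, ∑ j, t j * (∏ i, ‖(φ i).1 (x j i)‖) ^ p := by
  obtain ⟨C, hC0, hC⟩ := hf
  refine ⟨C, hC0, fun m x t ht => sum_mul_le_of_forall_sum_le
    (g := fun y => dist (f (a + y)) (f a) ^ q)
    (h := fun (φ : ∀ i, {φ : X i →L[𝕜] 𝕜 // ‖φ‖ ≤ 1}) y => (∏ i, ‖(φ i).1 (y i)‖) ^ p)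
    hC0 (fun _ => Real.rpow_nonneg dist_nonneg _)
    (fun _ _ => Real.rpow_nonneg (Finset.prod_nonneg fun i _ => norm_nonneg _) _)
    (bddAbove_range_prod_norm_rpow hp) ?_ x ht⟩
  simpa only [div_one, Real.rpow_one] using hC

end DualUnitBall

theorem stmt8_general {𝕜 : Type*} [RCLike 𝕜] {n : ℕ} {X : Fin n → Type*}
    [∀ i, NormedAddCommGroup (X i)] [∀ i, NormedSpace 𝕜 (X i)]
    {Y : Type*} [MetricSpace Y]
    (p₁ p₂ q₁ q₂ : ℝ)
    (hp₁ : 1 ≤ p₁) (hq₁ : 1 ≤ q₁) (hq₁₂ : q₁ ≤ q₂)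
    (hpq₁ : p₁ ≤ q₁)
    (hstar : 1 / p₁ - 1 / q₁ ≤ 1 / p₂ - 1 / q₂)
    (hlt : p₁ < p₂)
    (f : (∀ i, X i) → Y) (a : ∀ i, X i)
    (hf : MapSemiIntegralAt (𝕜 := 𝕜) q₁ 1 p₁ f a) :
    MapSemiIntegralAt (𝕜 := 𝕜) q₂ (q₂ * p₁ / (q₁ * p₂)) p₂ f a := by
  have hp₁0 : 0 < p₁ := zero_lt_one.trans_le hp₁
  have hp₂0 : 0 < p₂ := hp₁0.trans hlt
  have hq : q₁ < q₂ := lt_of_star_condition hp₁0 hlt hq₁₂ hstar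
  have hpq : p₂ * q₁ ≤ p₁ * q₂ := mul_le_mul_of_star_condition hp₁0 hlt.le hpq₁ hq₁₂ hstar
  obtain ⟨C, hC0, hC⟩ := hf.exists_sum_mul_le hp₁0.le
  refine ⟨C ^ (p₂ / p₁), by positivity, fun m x => ?_⟩
  have hprod : ∀ φ : ∀ i, {φ : X i →L[𝕜] 𝕜 // ‖φ‖ ≤ 1}, ∀ j, 0 ≤ ∏ i, ‖(φ i).1 (x j i)‖ :=
    fun φ j => Finset.prod_nonneg fun i _ => norm_nonneg _
  have key := rpow_sum_rpow_le_of_forall_weighted (fun j => dist_nonneg) hprod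
    (bddAbove_range_sum _ fun j => bddAbove_range_prod_norm_rpow hp₂0.le (x j))
    hC0 hp₁0 hp₂0 (zero_lt_one.trans_le hq₁) hq hpq (hC m x)
  set E := ∑ j, dist (f (a + x j)) (f a) ^ q₂
  set S := ⨆ φ : ∀ i, {φ : X i →L[𝕜] 𝕜 // ‖φ‖ ≤ 1}, ∑ j, (∏ i, ‖(φ i).1 (x j i)‖) ^ p₂
  have hE : 0 ≤ E := Finset.sum_nonneg fun j _ => Real.rpow_nonneg dist_nonneg _
  have hS : 0 ≤ S := Real.iSup_nonneg fun φ => Finset.sum_nonneg fun j _ =>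
    Real.rpow_nonneg (hprod φ j) _
  calc E ^ (1 / (q₂ * p₁ / (q₁ * p₂))) = (E ^ (q₁ / q₂)) ^ (p₂ / p₁) := by
        rw [← Real.rpow_mul hE]
        field_simp
    _ ≤ (C * S ^ (p₁ / p₂)) ^ (p₂ / p₁) := by gcongr
    _ = C ^ (p₂ / p₁) * S := by
        rw [Real.mul_rpow hC0 (Real.rpow_nonneg hS _), ← Real.rpow_mul hS,
          div_mul_div_cancel₀' hp₁0.ne', div_self hp₂0.ne', Real.rpow_one]

/-- If `p₁, p₂, q₁, q₂` satisfy condition (★) with `p₁ < p₂` and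
`α = q₂p₁/(q₁p₂)`, then every arbitrary map `f : X₁ × ⋯ × X_n → Y` which is
`((q₁,1),p₁)`-semi-integral at `a` is `((q₂,α),p₂)`-semi-integral at `a`. -/
theorem stmt8 {𝕜 : Type*} [RCLike 𝕜] {n : ℕ} {X : Fin n → Type*}
    [∀ i, NormedAddCommGroup (X i)] [∀ i, NormedSpace 𝕜 (X i)]
    {Y : Type*} [MetricSpace Y]
    (p₁ p₂ q₁ q₂ : ℝ)
    (hp₁ : 1 ≤ p₁) (hp₁₂ : p₁ ≤ p₂) (hq₁ : 1 ≤ q₁) (hq₁₂ : q₁ ≤ q₂)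
    (hpq₁ : p₁ ≤ q₁) (hpq₂ : p₂ ≤ q₂)
    (hstar : 1 / p₁ - 1 / q₁ ≤ 1 / p₂ - 1 / q₂)
    (hlt : p₁ < p₂)
    (f : (∀ i, X i) → Y) (a : ∀ i, X i)
    (hf : MapSemiIntegralAt (𝕜 := 𝕜) q₁ 1 p₁ f a) :
    MapSemiIntegralAt (𝕜 := 𝕜) q₂ (q₂ * p₁ / (q₁ * p₂)) p₂ f a :=
  stmt8_general p₁ p₂ q₁ q₂ hp₁ hq₁ hq₁₂ hpq₁ hstar hlt f a hf
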